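/- arXiv:2412.15520 — 4 statements merged into one kernel-verified Lean document; each statement's English description precedes it below -/
import Mathlib

section
/- Suppose Σ_xx - Σ_xz Σ_zz⁻¹ Σ_zx = Σ + (μ₁-μ₀)ᵀ s (μ₁-μ₀) and Σ_xy - Σ_xz Σ_zz⁻¹ Σ_zy = (μ₁-μ₀)ᵀ s, where s = Σ_yy - Σ_yz Σ_zz⁻¹ Σ_zy is a scalar and Σ is invertible. If b̄₁ solves (Σ_xx - Σ_xz Σ_zz⁻¹ Σ_zx) b̄₁ = Σ_xy - Σ_xz Σ_zz⁻¹ Σ_zy, then b̄₁ = β₁ · s · (1 - (μ₁-μ₀) b̄₁), where β₁ = Σ⁻¹ (μ₁-μ₀)ᵀ. -/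
open Matrix

/-- If `Σxx - Σxz Σzz⁻¹ Σzx = Σ + (μ₁-μ₀)ᵀ s (μ₁-μ₀)` and
`Σxy - Σxz Σzz⁻¹ Σzy = (μ₁-μ₀)ᵀ s` with scalar `s` and invertible `Σ`, and `b̄₁` solves
`(Σxx - Σxz Σzz⁻¹ Σzx) b̄₁ = Σxy - Σxz Σzz⁻¹ Σzy`, then
`b̄₁ = β₁ · s · (1 - (μ₁-μ₀) b̄₁)` where `β₁ = Σ⁻¹(μ₁-μ₀)ᵀ`. -/
theorem stmt8 {p q : ℕ} (μ₀ μ₁ : Matrix (Fin 1) (Fin p) ℝ)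
    (S : Matrix (Fin p) (Fin p) ℝ) (hS : IsUnit S.det) (s : ℝ)
    (Sxx : Matrix (Fin p) (Fin p) ℝ) (Szz : Matrix (Fin q) (Fin q) ℝ)
    (Sxz : Matrix (Fin p) (Fin q) ℝ) (Szx : Matrix (Fin q) (Fin p) ℝ)
    (Sxy : Matrix (Fin p) (Fin 1) ℝ) (Szy : Matrix (Fin q) (Fin 1) ℝ)
    (hzz : IsUnit Szz.det)
    (h1 : Sxx - Sxz * Szz⁻¹ * Szx = S + s • ((μ₁ - μ₀)ᵀ * (μ₁ - μ₀)))
    (h2 : Sxy - Sxz * Szz⁻¹ * Szy = s • (μ₁ - μ₀)ᵀ)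
    (b₁ : Matrix (Fin p) (Fin 1) ℝ)
    (hb₁ : (Sxx - Sxz * Szz⁻¹ * Szx) * b₁ = Sxy - Sxz * Szz⁻¹ * Szy)
    (β₁ : Matrix (Fin p) (Fin 1) ℝ) (hβ₁ : β₁ = S⁻¹ * (μ₁ - μ₀)ᵀ) :
    b₁ = (s * (1 - ((μ₁ - μ₀) * b₁) 0 0)) • β₁ := by
  set d := μ₁ - μ₀ with hd
  have hdd : dᵀ * (d * b₁) = ((d * b₁) 0 0) • dᵀ := by
    ext i j
    have hj : j = 0 := Subsingleton.elim _ _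
    subst hj
    simp [Matrix.mul_apply, Fin.sum_univ_one, mul_comm]
  have key : S * b₁ = (s * (1 - ((d * b₁) 0 0))) • dᵀ := by
    rw [h1, h2] at hb₁
    rw [Matrix.add_mul, Matrix.smul_mul, Matrix.mul_assoc, hdd] at hb₁
    have : S * b₁ = s • dᵀ - s • ((d * b₁) 0 0) • dᵀ := by
      rw [← hb₁]; abel
    rw [this, smul_smul, mul_sub, mul_one, sub_smul]
  have : b₁ = S⁻¹ * (S * b₁) := by
    rw [← Matrix.mul_assoc, Matrix.nonsing_inv_mul S hS, Matrix.one_mul]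
  conv_lhs => rw [this, key]
  rw [Matrix.mul_smul, hβ₁]
end

section
/- In the noise-added model y = y* + v, W = W* + U with E(v)=0, Var(v)=σ², E(U)=0, Var(U)=σ²I, (U,v) mutually independent and independent of (W*,y*), the corrected estimating function m_θ(θ, φ) = W̃ᵀ y - (1/φ)(W̃ᵀ W̃ - σ² J) θ is unbiased at the true parameters: E[m_θ(θ, φ)] = 0, where W̃ = (1, W), J = diag(0, I_d), θ = φ·(b₀, b̄ᵀ)ᵀ, φ = 1/τ², b̄ = [Var(W*)]⁻¹ Cov(W*, y*), b₀ = E(y*) - E(W*) b̄, and τ² = Var(y* - b₀ - W* b̄). -/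
open MeasureTheory ProbabilityTheory

noncomputable instance matrixMeasurableSpace {m n : Type*} [MeasurableSpace ℝ] :
    MeasurableSpace (Matrix m n ℝ) :=
  (inferInstance : MeasurableSpace (m → n → ℝ))

lemma l2mul {Ω : Type*} [MeasurableSpace Ω] {μ : Measure Ω} [IsFiniteMeasure μ]
    {f g : Ω → ℝ} (hf : MemLp f 2 μ) (hg : MemLp g 2 μ) :
    Integrable (fun ω => f ω * g ω) μ := by
  have h : MemLp (f • g) 1 μ := hg.smul hf (hpqr := ⟨by simp [ENNReal.inv_two_add_inv_two]⟩)
  simpa [Pi.smul_apply', smul_eq_mul, Pi.mul_def] using h.integrable le_rfl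

lemma l2mulc {Ω : Type*} [MeasurableSpace Ω] {μ : Measure Ω} {f : Ω → ℝ} (hf : MemLp f 2 μ)
    (c : ℝ) : MemLp (fun ω => f ω * c) 2 μ := by simpa [mul_comm] using hf.const_mul c

/-- In the noise-added model `y = y* + v`, `W = W* + U` with zero-mean noise
of variance `σ²` (and `Var(U) = σ²I`), the noise independent of the signal, the corrected
estimating function `m_θ(θ,φ) = W̃ᵀy - (1/φ)(W̃ᵀW̃ - σ²J)θ` is unbiased at the true
parameters `θ = φ(b₀, b̄ᵀ)ᵀ`, `φ = 1/τ²`, where `b̄ = Var(W*)⁻¹Cov(W*,y*)`,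
`b₀ = E(y*) - E(W*)b̄`, `τ² = Var(y* - b₀ - W*b̄)`. -/
theorem stmt12 {Ω : Type*} [m0 : MeasurableSpace Ω] (μ : Measure Ω)
    [IsProbabilityMeasure μ] {d : ℕ} (σ : ℝ)
    (ystar y v : Ω → ℝ) (Wstar W U : Ω → Matrix (Fin 1) (Fin d) ℝ)
    (hystar : Measurable ystar) (hWstar : Measurable Wstar)
    (hv : Measurable v) (hU : Measurable U)
    (hyL : MemLp ystar 2 μ) (hWL : ∀ i, MemLp (fun ω => Wstar ω 0 i) 2 μ)
    (hvL : MemLp v 2 μ) (hUL : ∀ i, MemLp (fun ω => U ω 0 i) 2 μ)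
    -- noise moments: E(v)=0, Var(v)=σ², E(U)=0, Var(U)=σ²I
    (hvmean : ∫ ω, v ω ∂μ = 0) (hvvar : ∫ ω, (v ω) ^ 2 ∂μ = σ ^ 2)
    (hUmean : ∀ i, ∫ ω, U ω 0 i ∂μ = 0)
    (hUvar : ∀ i j, ∫ ω, U ω 0 i * U ω 0 j ∂μ = if i = j then σ ^ 2 else 0)
    -- mutual independence of the noise components and independence from the signal:
    (hvU : IndepFun v U μ)
    (hindep : IndepFun (fun ω => (v ω, U ω)) (fun ω => (ystar ω, Wstar ω)) μ)
    (hy : ∀ ω, y ω = ystar ω + v ω)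
    (hW : ∀ ω i, W ω 0 i = Wstar ω 0 i + U ω 0 i)
    -- true parameters
    (varWstar : Matrix (Fin d) (Fin d) ℝ)
    (hvarWstar : varWstar = Matrix.of fun i j =>
      ∫ ω, (Wstar ω 0 i - ∫ ω', Wstar ω' 0 i ∂μ) *
        (Wstar ω 0 j - ∫ ω', Wstar ω' 0 j ∂μ) ∂μ)
    (hvarWinv : IsUnit varWstar.det)
    (b : Matrix (Fin d) (Fin 1) ℝ)
    (hb : b = varWstar⁻¹ * Matrix.of fun i (_ : Fin 1) =>
      ∫ ω, (Wstar ω 0 i - ∫ ω', Wstar ω' 0 i ∂μ) * (ystar ω - ∫ ω', ystar ω' ∂μ) ∂μ)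
    (b₀ : ℝ) (hb₀ : b₀ = (∫ ω, ystar ω ∂μ) - ∑ i, (∫ ω, Wstar ω 0 i ∂μ) * b i 0)
    (τsq : ℝ)
    (hτsq : τsq = ∫ ω, (ystar ω - b₀ - ∑ i, Wstar ω 0 i * b i 0
      - ∫ ω', (ystar ω' - b₀ - ∑ i, Wstar ω' 0 i * b i 0) ∂μ) ^ 2 ∂μ)
    (hτpos : 0 < τsq)
    (φ : ℝ) (hφ : φ = 1 / τsq)
    (θ : Fin (d + 1) → ℝ) (hθ : θ = fun k => φ * (Fin.cons b₀ (fun i => b i 0) : Fin (d + 1) → ℝ) k)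
    -- augmented covariate W̃ = (1, W) and J = diag(0, I_d)
    (wt : Ω → Fin (d + 1) → ℝ) (hwt : ∀ ω, wt ω = (Fin.cons 1 (fun i => W ω 0 i) : Fin (d + 1) → ℝ))
    (J : Matrix (Fin (d + 1)) (Fin (d + 1)) ℝ)
    (hJ : J = Matrix.of fun k l => if k = l ∧ k ≠ 0 then (1 : ℝ) else 0) :
    ∀ k, ∫ ω, (wt ω k * y ω
        - (1 / φ) * ∑ l, (wt ω k * wt ω l - σ ^ 2 * J k l) * θ l) ∂μ = 0 := by
  have hφne : φ ≠ 0 := by rw [hφ]; exact one_div_ne_zero (ne_of_gt hτpos)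
  set cc : Fin (d + 1) → ℝ := Fin.cons b₀ (fun i => b i 0) with hcc
  -- abbreviations for means
  set my : ℝ := ∫ ω, ystar ω ∂μ with hmy
  -- ε and η
  set ε : Ω → ℝ := fun ω => ystar ω - b₀ - ∑ i, Wstar ω 0 i * b i 0 with hεdef
  set η : Ω → ℝ := fun ω => v ω - ∑ i, U ω 0 i * b i 0 with hηdef
  -- MemLp facts
  have hεL : MemLp ε 2 μ :=
    (hyL.sub (memLp_const b₀)).sub (memLp_finset_sum _ fun i _ => l2mulc (hWL i) _)
  have hηL : MemLp η 2 μ := hvL.sub (memLp_finset_sum _ fun i _ => l2mulc (hUL i) _)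
  have hWmL : ∀ i, MemLp (fun ω => Wstar ω 0 i - ∫ ω', Wstar ω' 0 i ∂μ) 2 μ :=
    fun i => (hWL i).sub (memLp_const _)
  have hymL : MemLp (fun ω => ystar ω - my) 2 μ := hyL.sub (memLp_const _)
  -- Integrability
  have hyint : Integrable ystar μ := hyL.integrable one_le_two
  have hvint : Integrable v μ := hvL.integrable one_le_two
  have hWint : ∀ i, Integrable (fun ω => Wstar ω 0 i) μ := fun i => (hWL i).integrable one_le_two
  have hUint : ∀ i, Integrable (fun ω => U ω 0 i) μ := fun i => (hUL i).integrable one_le_two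
  have hεint : Integrable ε μ := hεL.integrable one_le_two
  have hηint : Integrable η μ := hηL.integrable one_le_two
  -- mean of ε
  have iy0 : Integrable (fun ω => ystar ω - b₀) μ := hyint.sub (integrable_const _)
  have iWs : Integrable (fun ω => ∑ i, Wstar ω 0 i * b i 0) μ :=
    integrable_finset_sum _ fun i _ => (hWint i).mul_const _
  have iUs : Integrable (fun ω => ∑ i, U ω 0 i * b i 0) μ :=
    integrable_finset_sum _ fun i _ => (hUint i).mul_const _
  have hεmean : ∫ ω, ε ω ∂μ = 0 := by
    simp only [hεdef]
    rw [integral_sub iy0 iWs, integral_sub hyint (integrable_const _),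
      integral_finset_sum _ fun i _ => (hWint i).mul_const _]
    simp_rw [integral_mul_const, integral_const, probReal_univ, one_smul]
    rw [hb₀]; ring
  -- mean of η
  have hηmean : ∫ ω, η ω ∂μ = 0 := by
    simp only [hηdef]
    rw [integral_sub hvint iUs, integral_finset_sum _ fun i _ => (hUint i).mul_const _, hvmean]
    simp_rw [integral_mul_const]
    simp [hUmean]
  -- centered form of ε
  have hεalt : ∀ ω, ε ω = (ystar ω - my)
      - ∑ j, (Wstar ω 0 j - ∫ ω', Wstar ω' 0 j ∂μ) * b j 0 := by
    intro ω
    simp only [hεdef]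
    simp only [sub_mul, Finset.sum_sub_distrib, hb₀, hmy]
    ring
  -- covariance identity: varWstar * b = cov vector
  have hVb : ∀ i, ∑ j, (∫ ω, (Wstar ω 0 i - ∫ ω', Wstar ω' 0 i ∂μ) *
      (Wstar ω 0 j - ∫ ω', Wstar ω' 0 j ∂μ) ∂μ) * b j 0
      = ∫ ω, (Wstar ω 0 i - ∫ ω', Wstar ω' 0 i ∂μ) * (ystar ω - my) ∂μ := by
    intro i
    have h1 : varWstar * b = Matrix.of fun i (_ : Fin 1) =>
        ∫ ω, (Wstar ω 0 i - ∫ ω', Wstar ω' 0 i ∂μ) * (ystar ω - my) ∂μ := by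
      rw [hb, ← Matrix.mul_assoc, Matrix.mul_nonsing_inv _ hvarWinv, Matrix.one_mul, hmy]
    have h2 := congrArg (fun M => M i 0) h1
    simpa [Matrix.mul_apply, hvarWstar] using h2
  -- key covariance fact: ∫ Wstar_i * ε = 0
  have hcov : ∀ i, ∫ ω, Wstar ω 0 i * ε ω ∂μ = 0 := by
    intro i
    have e1 : ∀ ω, Wstar ω 0 i * ε ω
        = ((Wstar ω 0 i - ∫ ω', Wstar ω' 0 i ∂μ) * (ystar ω - my)
          - ∑ j, ((Wstar ω 0 i - ∫ ω', Wstar ω' 0 i ∂μ)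
              * (Wstar ω 0 j - ∫ ω', Wstar ω' 0 j ∂μ)) * b j 0)
          + (∫ ω', Wstar ω' 0 i ∂μ) * ε ω := by
      intro ω
      rw [hεalt ω]
      simp only [mul_assoc]
      rw [← Finset.mul_sum]
      ring
    have i1 : Integrable (fun ω => (Wstar ω 0 i - ∫ ω', Wstar ω' 0 i ∂μ) * (ystar ω - my)) μ :=
      l2mul (hWmL i) hymL
    have i2 : ∀ j, Integrable (fun ω => ((Wstar ω 0 i - ∫ ω', Wstar ω' 0 i ∂μ)
        * (Wstar ω 0 j - ∫ ω', Wstar ω' 0 j ∂μ)) * b j 0) μ :=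
      fun j => (l2mul (hWmL i) (hWmL j)).mul_const _
    calc ∫ ω, Wstar ω 0 i * ε ω ∂μ
        = ∫ ω, (((Wstar ω 0 i - ∫ ω', Wstar ω' 0 i ∂μ) * (ystar ω - my)
          - ∑ j, ((Wstar ω 0 i - ∫ ω', Wstar ω' 0 i ∂μ)
              * (Wstar ω 0 j - ∫ ω', Wstar ω' 0 j ∂μ)) * b j 0)
          + (∫ ω', Wstar ω' 0 i ∂μ) * ε ω) ∂μ := by
          exact integral_congr_ae (Filter.Eventually.of_forall e1)
      _ = 0 := by
          have i2s : Integrable (fun ω => ∑ j, ((Wstar ω 0 i - ∫ ω', Wstar ω' 0 i ∂μ)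
              * (Wstar ω 0 j - ∫ ω', Wstar ω' 0 j ∂μ)) * b j 0) μ :=
            integrable_finset_sum _ fun j _ => i2 j
          have i3 : Integrable (fun ω => (Wstar ω 0 i - ∫ ω', Wstar ω' 0 i ∂μ) * (ystar ω - my)
              - ∑ j, ((Wstar ω 0 i - ∫ ω', Wstar ω' 0 i ∂μ)
                  * (Wstar ω 0 j - ∫ ω', Wstar ω' 0 j ∂μ)) * b j 0) μ := i1.sub i2s
          have i4 : Integrable (fun ω => (∫ ω', Wstar ω' 0 i ∂μ) * ε ω) μ := hεint.const_mul _
          rw [integral_add i3 i4,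
            integral_sub i1 i2s,
            integral_finset_sum _ fun j _ => i2 j, integral_const_mul, hεmean]
          simp_rw [integral_mul_const]
          rw [hVb i]
          ring
  -- independence facts
  have hFε : Measurable (fun p : ℝ × Matrix (Fin 1) (Fin d) ℝ =>
      p.1 - b₀ - ∑ j, p.2 0 j * b j 0) := by fun_prop
  have hFη : Measurable (fun p : ℝ × Matrix (Fin 1) (Fin d) ℝ =>
      p.1 - ∑ j, p.2 0 j * b j 0) := by fun_prop
  have hPW : ∀ i, Measurable (fun p : ℝ × Matrix (Fin 1) (Fin d) ℝ => p.2 0 i) := by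
    intro i; fun_prop
  have hPM : ∀ i, Measurable (fun M : Matrix (Fin 1) (Fin d) ℝ => M 0 i) := by
    intro i; fun_prop
  have hIηε : IndepFun η ε μ := hindep.comp hFη hFε
  have hIηW : ∀ i, IndepFun η (fun ω => Wstar ω 0 i) μ := fun i => hindep.comp hFη (hPW i)
  have hIUε : ∀ i, IndepFun (fun ω => U ω 0 i) ε μ := fun i => hindep.comp (hPW i) hFε
  have hIUv : ∀ i, IndepFun (fun ω => U ω 0 i) v μ :=
    fun i => (hvU.comp measurable_id (hPM i)).symm
  -- product integrals via independence
  have hWη : ∀ i, ∫ ω, Wstar ω 0 i * η ω ∂μ = 0 := by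
    intro i
    rw [(hIηW i).symm.integral_fun_mul_eq_mul_integral (hWL i).aestronglyMeasurable hηL.aestronglyMeasurable,
      hηmean, mul_zero]
  have hUε : ∀ i, ∫ ω, U ω 0 i * ε ω ∂μ = 0 := by
    intro i
    rw [(hIUε i).integral_fun_mul_eq_mul_integral (hUL i).aestronglyMeasurable hεL.aestronglyMeasurable,
      hεmean, mul_zero]
  have hUv : ∀ i, ∫ ω, U ω 0 i * v ω ∂μ = 0 := by
    intro i
    rw [(hIUv i).integral_fun_mul_eq_mul_integral (hUL i).aestronglyMeasurable hvL.aestronglyMeasurable,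
      hvmean, mul_zero]
  -- ∫ U_i * η = -σ² b_i
  have hUη : ∀ i, ∫ ω, U ω 0 i * η ω ∂μ = -(σ ^ 2 * b i 0) := by
    intro i
    have e1 : ∀ ω, U ω 0 i * η ω = U ω 0 i * v ω - ∑ j, (U ω 0 i * U ω 0 j) * b j 0 := by
      intro ω
      simp only [hηdef]
      rw [mul_sub, Finset.mul_sum]
      simp only [mul_assoc]
    have i1 : Integrable (fun ω => U ω 0 i * v ω) μ := l2mul (hUL i) hvL
    have i2 : ∀ j, Integrable (fun ω => (U ω 0 i * U ω 0 j) * b j 0) μ :=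
      fun j => (l2mul (hUL i) (hUL j)).mul_const _
    calc ∫ ω, U ω 0 i * η ω ∂μ
        = ∫ ω, (U ω 0 i * v ω - ∑ j, (U ω 0 i * U ω 0 j) * b j 0) ∂μ :=
          integral_congr_ae (Filter.Eventually.of_forall e1)
      _ = -(σ ^ 2 * b i 0) := by
          have i2s : Integrable (fun ω => ∑ j, (U ω 0 i * U ω 0 j) * b j 0) μ :=
            integrable_finset_sum _ fun j _ => i2 j
          rw [integral_sub i1 i2s, integral_finset_sum _ fun j _ => i2 j, hUv i]
          simp_rw [integral_mul_const, hUvar]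
          simp [Finset.sum_ite_eq, ite_mul]
  -- the J-sum
  have hS : ∀ k : Fin (d + 1), ∑ l, J k l * cc l = if k = 0 then 0 else cc k := by
    intro k
    rw [hJ]
    by_cases hk : k = 0
    · simp [hk]
    · simp only [Matrix.of_apply, hk, ne_eq, not_false_iff, and_true, ite_mul, one_mul, zero_mul]
      simp [Finset.sum_ite_eq, hk]
  -- MemLp of wt components
  have hwtL : ∀ k, MemLp (fun ω => wt ω k) 2 μ := by
    intro k
    induction k using Fin.cases with
    | zero => simp only [hwt, Fin.cons_zero]; exact memLp_const 1
    | succ i =>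
        have : (fun ω => wt ω i.succ) = fun ω => Wstar ω 0 i + U ω 0 i := by
          funext ω; rw [hwt ω, Fin.cons_succ, hW]
        rw [this]; exact (hWL i).add (hUL i)
  -- pointwise rewriting of the integrand
  intro k
  have hsum_wc : ∀ ω, ∑ l, wt ω l * cc l = b₀ + ∑ i, W ω 0 i * b i 0 := by
    intro ω
    rw [hwt ω, Fin.sum_univ_succ]
    simp [hcc]
  have hZ : ∀ ω, y ω - (b₀ + ∑ i, W ω 0 i * b i 0) = ε ω + η ω := by
    intro ω
    simp only [hy ω, hεdef, hηdef]
    simp only [hW, add_mul, Finset.sum_add_distrib]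
    ring
  have hpt : ∀ ω, wt ω k * y ω - (1 / φ) * ∑ l, (wt ω k * wt ω l - σ ^ 2 * J k l) * θ l
      = wt ω k * (ε ω + η ω) + σ ^ 2 * (if k = 0 then 0 else cc k) := by
    intro ω
    have h1 : ∑ l, (wt ω k * wt ω l - σ ^ 2 * J k l) * θ l
        = φ * ∑ l, (wt ω k * wt ω l - σ ^ 2 * J k l) * cc l := by
      rw [Finset.mul_sum]
      refine Finset.sum_congr rfl fun l _ => ?_
      rw [hθ]; ring
    rw [h1, ← mul_assoc, one_div, inv_mul_cancel₀ hφne, one_mul]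
    have h2 : ∑ l, (wt ω k * wt ω l - σ ^ 2 * J k l) * cc l
        = wt ω k * (∑ l, wt ω l * cc l) - σ ^ 2 * ∑ l, J k l * cc l := by
      rw [Finset.mul_sum, Finset.mul_sum, ← Finset.sum_sub_distrib]
      refine Finset.sum_congr rfl fun l _ => ?_
      ring
    rw [h2, hsum_wc ω, hS k, ← hZ ω]
    ring
  have hwtZint : Integrable (fun ω => wt ω k * (ε ω + η ω)) μ :=
    l2mul (hwtL k) (hεL.add hηL)
  calc ∫ ω, (wt ω k * y ω - (1 / φ) * ∑ l, (wt ω k * wt ω l - σ ^ 2 * J k l) * θ l) ∂μ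
      = ∫ ω, (wt ω k * (ε ω + η ω) + σ ^ 2 * (if k = 0 then 0 else cc k)) ∂μ :=
        integral_congr_ae (Filter.Eventually.of_forall hpt)
    _ = (∫ ω, wt ω k * (ε ω + η ω) ∂μ) + σ ^ 2 * (if k = 0 then 0 else cc k) := by
        have hcst : Integrable (fun _ : Ω => σ ^ 2 * (if k = 0 then 0 else cc k)) μ :=
          integrable_const _
        rw [integral_add hwtZint hcst, integral_const, probReal_univ,
          one_smul]
    _ = 0 := by
        induction k using Fin.cases with
        | zero =>
            have : ∀ ω, wt ω (0 : Fin (d + 1)) * (ε ω + η ω) = ε ω + η ω := by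
              intro ω; rw [hwt ω]; simp
            rw [integral_congr_ae (Filter.Eventually.of_forall this),
              integral_add hεint hηint, hεmean, hηmean]
            simp
        | succ i =>
            have e1 : ∀ ω, wt ω i.succ * (ε ω + η ω)
                = Wstar ω 0 i * ε ω + Wstar ω 0 i * η ω + U ω 0 i * ε ω + U ω 0 i * η ω := by
              intro ω; rw [hwt ω, Fin.cons_succ, hW]; ring
            rw [integral_congr_ae (Filter.Eventually.of_forall e1)]
            have j1 : Integrable (fun ω => Wstar ω 0 i * ε ω) μ := l2mul (hWL i) hεL
            have j2 : Integrable (fun ω => Wstar ω 0 i * η ω) μ := l2mul (hWL i) hηL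
            have j3 : Integrable (fun ω => U ω 0 i * ε ω) μ := l2mul (hUL i) hεL
            have j4 : Integrable (fun ω => U ω 0 i * η ω) μ := l2mul (hUL i) hηL
            have j12 : Integrable (fun ω => Wstar ω 0 i * ε ω + Wstar ω 0 i * η ω) μ := j1.add j2
            have j123 : Integrable (fun ω => Wstar ω 0 i * ε ω + Wstar ω 0 i * η ω
                + U ω 0 i * ε ω) μ := j12.add j3
            rw [integral_add j123 j4, integral_add j12 j3, integral_add j1 j2,
              hcov i, hWη i, hUε i, hUη i]
            have : (i.succ : Fin (d + 1)) ≠ 0 := Fin.succ_ne_zero i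
            simp [this, hcc]
end

section
/- Let Q̄ be a symmetric positive definite (d+1)×(d+1) matrix, φ > 0 a scalar, and θ ∈ ℝ^{(d+1)×1}. Then the (d+2)×(d+2) symmetric block matrix Ā = [[φ⁻¹ Q̄, -φ⁻² Q̄ θ], [-φ⁻² θᵀ Q̄, (1/(2φ²)) + φ⁻³ θᵀ Q̄ θ]] is positive definite. -/
open Matrix

/-- For a symmetric positive definite `Q̄`, `φ > 0` and `θ ∈ ℝ^{(d+1)×1}`,
the block matrix `[[φ⁻¹Q̄, -φ⁻²Q̄θ], [-φ⁻²θᵀQ̄, 1/(2φ²) + φ⁻³θᵀQ̄θ]]` is positive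
definite. -/
theorem stmt14 {d : ℕ} (Q : Matrix (Fin (d + 1)) (Fin (d + 1)) ℝ) (hQ : Q.PosDef)
    (φ : ℝ) (hφ : 0 < φ) (θ : Matrix (Fin (d + 1)) (Fin 1) ℝ) :
    (Matrix.fromBlocks (φ⁻¹ • Q) (-(φ ^ 2)⁻¹ • (Q * θ)) (-(φ ^ 2)⁻¹ • (θᵀ * Q))
      (Matrix.of fun (_ _ : Fin 1) =>
        1 / (2 * φ ^ 2) + (φ ^ 3)⁻¹ * (θᵀ * Q * θ) 0 0)).PosDef := by
  have hQsymm : Qᵀ = Q := hQ.isHermitian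
  set s : ℝ := 1 / (2 * φ ^ 2) + (φ ^ 3)⁻¹ * (θᵀ * Q * θ) 0 0 with hs
  have e2 : (-(φ ^ 2)⁻¹ • (θᵀ * Q))ᵀ = -(φ ^ 2)⁻¹ • (Q * θ) := by
    rw [transpose_smul, transpose_mul, transpose_transpose, hQsymm]
  have e3 : (-(φ ^ 2)⁻¹ • (Q * θ))ᵀ = -(φ ^ 2)⁻¹ • (θᵀ * Q) := by
    rw [transpose_smul, transpose_mul, hQsymm]
  have e1 : (φ⁻¹ • Q)ᵀ = φ⁻¹ • Q := by rw [transpose_smul, hQsymm]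
  have e4 : (Matrix.of fun (_ _ : Fin 1) => s)ᵀ = Matrix.of fun (_ _ : Fin 1) => s := by
    ext i j; rfl
  rw [posDef_iff_dotProduct_mulVec]
  constructor
  · show _ = _
    rw [conjTranspose_eq_transpose_of_trivial, fromBlocks_transpose]
    simp only [e1, e2, e3, e4]
  · intro x hx
    set u : Fin (d + 1) → ℝ := x ∘ Sum.inl with hu
    set t : ℝ := x (Sum.inr 0) with ht
    set v : Fin (d + 1) → ℝ := fun k => θ k 0 with hv
    have hxe : x = Sum.elim u (fun _ => t) := by
      funext i
      rcases i with i | i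
      · rfl
      · rw [Sum.elim_inr, Subsingleton.elim i (0 : Fin 1)]
    set a : ℝ := u ⬝ᵥ Q *ᵥ u with ha
    set b : ℝ := u ⬝ᵥ Q *ᵥ v with hb
    set c : ℝ := v ⬝ᵥ Q *ᵥ v with hc
    -- basic computations
    have hθmul : θ *ᵥ (fun _ : Fin 1 => t) = t • v := by
      funext k
      simp [mulVec, dotProduct, hv, mul_comm]
    have hθTmul : ∀ w : Fin (d + 1) → ℝ, θᵀ *ᵥ w = fun _ : Fin 1 => v ⬝ᵥ w := by
      intro w
      funext i
      have : i = 0 := Subsingleton.elim _ _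
      subst this
      simp [mulVec, dotProduct, hv, transpose_apply]
    have hb' : v ⬝ᵥ Q *ᵥ u = b := by
      rw [hb, dotProduct_mulVec, ← mulVec_transpose, hQsymm, dotProduct_comm]
    have hcs : (θᵀ * Q * θ) 0 0 = c := by
      rw [hc, dotProduct_mulVec]
      simp [mul_apply, vecMul, dotProduct, hv, Finset.sum_mul, Finset.mul_sum]
    rw [hxe]
    rw [show (star (Sum.elim u fun _ : Fin 1 => t)) = Sum.elim u (fun _ => t) from
      star_trivial _]
    rw [fromBlocks_mulVec]
    simp only [Sum.elim_comp_inl, Sum.elim_comp_inr]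
    rw [sumElim_dotProduct_sumElim]
    -- compute each piece
    have p1 : (φ⁻¹ • Q) *ᵥ u = φ⁻¹ • (Q *ᵥ u) := by rw [smul_mulVec]
    have p2 : (-(φ ^ 2)⁻¹ • (Q * θ)) *ᵥ (fun _ : Fin 1 => t) =
        (-(φ ^ 2)⁻¹ * t) • (Q *ᵥ v) := by
      rw [smul_mulVec, ← mulVec_mulVec, hθmul, mulVec_smul, smul_smul]
    have p3 : (-(φ ^ 2)⁻¹ • (θᵀ * Q)) *ᵥ u = fun _ : Fin 1 => -(φ ^ 2)⁻¹ * (v ⬝ᵥ Q *ᵥ u) := by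
      rw [smul_mulVec, ← mulVec_mulVec, hθTmul]
      funext i
      simp
    have p4 : (Matrix.of fun (_ _ : Fin 1) => s) *ᵥ (fun _ : Fin 1 => t) =
        fun _ : Fin 1 => s * t := by
      funext i
      simp [mulVec, dotProduct]
    rw [p1, p2, p3, p4]
    have expand : u ⬝ᵥ (φ⁻¹ • (Q *ᵥ u) + (-(φ ^ 2)⁻¹ * t) • (Q *ᵥ v)) +
        (fun _ : Fin 1 => t) ⬝ᵥ ((fun _ : Fin 1 => -(φ ^ 2)⁻¹ * (v ⬝ᵥ Q *ᵥ u)) +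
          fun _ : Fin 1 => s * t) =
        φ⁻¹ * a + (-(φ ^ 2)⁻¹ * t) * b + t * (-(φ ^ 2)⁻¹ * b + s * t) := by
      have fin1 : ∀ w : Fin 1 → ℝ, (fun _ : Fin 1 => t) ⬝ᵥ w = t * w 0 := by
        intro w; simp [dotProduct]
      rw [dotProduct_add, dotProduct_smul, dotProduct_smul, fin1]
      simp only [Pi.add_apply]
      rw [hb']
      simp only [smul_eq_mul, ← ha, ← hb]
      try ring
    rw [expand]
    -- completing the square
    set w : Fin (d + 1) → ℝ := u - (t / φ) • v with hw
    have hwq : w ⬝ᵥ Q *ᵥ w = a - (t / φ) * b - (t / φ) * b + (t / φ) ^ 2 * c := by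
      rw [hw]
      rw [sub_dotProduct, mulVec_sub, dotProduct_sub, dotProduct_sub,
        smul_dotProduct, mulVec_smul, dotProduct_smul, dotProduct_smul, smul_dotProduct]
      rw [hb']
      simp only [smul_eq_mul, ← ha, ← hb, ← hc]
      ring
    have key : φ⁻¹ * a + (-(φ ^ 2)⁻¹ * t) * b + t * (-(φ ^ 2)⁻¹ * b + s * t) =
        φ⁻¹ * (w ⬝ᵥ Q *ᵥ w) + t ^ 2 / (2 * φ ^ 2) := by
      rw [hwq, hs, hcs]
      field_simp
      ring
    rw [key]
    have hwnn : 0 ≤ w ⬝ᵥ Q *ᵥ w := by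
      have := hQ.posSemidef.dotProduct_mulVec_nonneg w
      rwa [star_trivial] at this
    rcases eq_or_ne t 0 with ht0 | ht0
    · have hu0 : u ≠ 0 := by
        intro h0
        apply hx
        rw [hxe, h0, ht0]
        funext i
        rcases i with i | i <;> simp
      have hwu : w = u := by rw [hw, ht0]; simp
      have hpos : 0 < u ⬝ᵥ Q *ᵥ u := by
        have := hQ.dotProduct_mulVec_pos hu0
        rwa [star_trivial] at this
      rw [hwu, ht0]
      positivity
    · have h2 : 0 < t ^ 2 / (2 * φ ^ 2) := by positivity
      have h1 : 0 ≤ φ⁻¹ * (w ⬝ᵥ Q *ᵥ w) := by positivity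
      linarith
end

section
/- Solving the corrected estimating equations Σᵢ [W̃ᵢᵀ yᵢ - (1/φ)(W̃ᵢᵀW̃ᵢ - σ²J)θ] = 0 and Σᵢ [1/(2φ) - (1/2)(yᵢ² - σ²) + (1/(2φ²))θᵀ(W̃ᵢᵀW̃ᵢ - σ²J)θ] = 0 yields the closed-form solution φ̂ = n / (‖y‖² - nσ² - yᵀW̃(W̃ᵀW̃ - nσ²J)⁻¹W̃ᵀy) and θ̂ = φ̂ (W̃ᵀW̃ - nσ²J)⁻¹ W̃ᵀ y, provided W̃ᵀW̃ - nσ²J is invertible and the denominator of φ̂ is nonzero. -/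
open Matrix

/-- Solving the corrected estimating equations
`Σᵢ [W̃ᵢᵀyᵢ - (1/φ)(W̃ᵢᵀW̃ᵢ - σ²J)θ] = 0` and
`Σᵢ [1/(2φ) - (1/2)(yᵢ² - σ²) + (1/(2φ²))θᵀ(W̃ᵢᵀW̃ᵢ - σ²J)θ] = 0`
yields `φ = n / (‖y‖² - nσ² - yᵀW̃(W̃ᵀW̃ - nσ²J)⁻¹W̃ᵀy)` and
`θ = φ(W̃ᵀW̃ - nσ²J)⁻¹W̃ᵀy`, provided `W̃ᵀW̃ - nσ²J` is invertible and the denominator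
is nonzero. -/
theorem stmt19 {n d : ℕ} (Wt : Matrix (Fin n) (Fin (d + 1)) ℝ)
    (y : Matrix (Fin n) (Fin 1) ℝ) (σ : ℝ) (hσ : 0 ≤ σ)
    (J : Matrix (Fin (d + 1)) (Fin (d + 1)) ℝ)
    (hJ : J = Matrix.of fun k l => if k = l ∧ k ≠ 0 then (1 : ℝ) else 0)
    (A : Matrix (Fin (d + 1)) (Fin (d + 1)) ℝ)
    (hA : A = Wtᵀ * Wt - ((n : ℝ) * σ ^ 2) • J)
    (hAinv : IsUnit A.det)
    (D : ℝ)
    (hD : D = (yᵀ * y) 0 0 - (n : ℝ) * σ ^ 2 - (yᵀ * Wt * A⁻¹ * Wtᵀ * y) 0 0)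
    (hDne : D ≠ 0)
    (φ : ℝ) (hφ : 0 < φ) (θ : Matrix (Fin (d + 1)) (Fin 1) ℝ)
    -- the first estimating equation, componentwise:
    (heq1 : ∀ k, ∑ i, (Wt i k * y i 0
      - (1 / φ) * ∑ l, (Wt i k * Wt i l - σ ^ 2 * J k l) * θ l 0) = 0)
    -- the second estimating equation:
    (heq2 : ∑ i, (1 / (2 * φ) - (1 / 2) * ((y i 0) ^ 2 - σ ^ 2)
      + (1 / (2 * φ ^ 2)) *
          ∑ k, ∑ l, θ k 0 * (Wt i k * Wt i l - σ ^ 2 * J k l) * θ l 0) = 0) :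
    φ = (n : ℝ) / D ∧ θ = φ • (A⁻¹ * (Wtᵀ * y)) := by
  have hφ' : φ ≠ 0 := ne_of_gt hφ
  have hAkl : ∀ k l, A k l = (∑ i, Wt i k * Wt i l) - (n : ℝ) * (σ ^ 2 * J k l) := by
    intro k l
    rw [hA]
    simp [Matrix.sub_apply, Matrix.smul_apply, Matrix.mul_apply, Matrix.transpose_apply]
    ring
  have hsum1 : ∀ k, ∑ i, ∑ l, (Wt i k * Wt i l - σ ^ 2 * J k l) * θ l 0
      = ∑ l, A k l * θ l 0 := by
    intro k
    rw [Finset.sum_comm]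
    refine Finset.sum_congr rfl fun l _ => ?_
    calc ∑ i, (Wt i k * Wt i l - σ ^ 2 * J k l) * θ l 0
        = ∑ i, ((Wt i k * Wt i l) * θ l 0 - (σ ^ 2 * J k l) * θ l 0) := by
          refine Finset.sum_congr rfl fun i _ => by ring
      _ = (∑ i, Wt i k * Wt i l) * θ l 0 - (n : ℝ) * ((σ ^ 2 * J k l) * θ l 0) := by
          rw [Finset.sum_sub_distrib, ← Finset.sum_mul, Finset.sum_const]
          simp
      _ = A k l * θ l 0 := by rw [hAkl]; ring
  have h1 : A * θ = φ • (Wtᵀ * y) := by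
    ext k j
    have hj : j = 0 := Subsingleton.elim _ _
    subst hj
    have h := heq1 k
    rw [Finset.sum_sub_distrib, ← Finset.mul_sum, hsum1 k, sub_eq_zero] at h
    have h' : ∑ l, A k l * θ l 0 = φ * ∑ i, Wt i k * y i 0 := by
      field_simp at h
      linarith
    simpa [Matrix.mul_apply, Matrix.smul_apply, Matrix.transpose_apply, smul_eq_mul] using h'
  have hθ : θ = φ • (A⁻¹ * (Wtᵀ * y)) := by
    have := congrArg (fun M => A⁻¹ * M) h1
    simpa [← Matrix.mul_assoc, Matrix.nonsing_inv_mul A hAinv, Matrix.mul_smul] using this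
  refine ⟨?_, hθ⟩
  set S : ℝ := (yᵀ * Wt * A⁻¹ * Wtᵀ * y) 0 0 with hS
  have hquad : ∑ k, ∑ l, θ k 0 * A k l * θ l 0 = φ ^ 2 * S := by
    have e1 : ∑ k, ∑ l, θ k 0 * A k l * θ l 0 = (θᵀ * (A * θ)) 0 0 := by
      simp [Matrix.mul_apply, Matrix.transpose_apply, Finset.mul_sum, mul_assoc]
    rw [e1, h1]
    have e2 : (θᵀ * (φ • (Wtᵀ * y))) 0 0 = φ * (θᵀ * (Wtᵀ * y)) 0 0 := by
      simp [Matrix.mul_smul]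
    rw [e2]
    have e3 : (θᵀ * (Wtᵀ * y)) 0 0 = (yᵀ * (Wt * θ)) 0 0 := by
      have ht : (θᵀ * (Wtᵀ * y))ᵀ = yᵀ * (Wt * θ) := by
        simp [Matrix.transpose_mul, Matrix.mul_assoc]
      calc (θᵀ * (Wtᵀ * y)) 0 0 = (θᵀ * (Wtᵀ * y))ᵀ 0 0 := rfl
        _ = (yᵀ * (Wt * θ)) 0 0 := by rw [ht]
    rw [e3, hθ, Matrix.mul_smul]
    have e5 : (yᵀ * (φ • (Wt * (A⁻¹ * (Wtᵀ * y))))) 0 0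
        = φ * (yᵀ * (Wt * (A⁻¹ * (Wtᵀ * y)))) 0 0 := by
      simp [Matrix.mul_smul]
    rw [e5, hS]
    have e6 : yᵀ * Wt * A⁻¹ * Wtᵀ * y = yᵀ * (Wt * (A⁻¹ * (Wtᵀ * y))) := by
      rw [Matrix.mul_assoc, Matrix.mul_assoc, Matrix.mul_assoc]
    rw [e6]
    ring
  have hsum2 : ∑ i, (∑ k, ∑ l, θ k 0 * (Wt i k * Wt i l - σ ^ 2 * J k l) * θ l 0)
      = φ ^ 2 * S := by
    rw [← hquad, Finset.sum_comm]
    refine Finset.sum_congr rfl fun k _ => ?_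
    rw [Finset.sum_comm]
    refine Finset.sum_congr rfl fun l _ => ?_
    calc ∑ i, θ k 0 * (Wt i k * Wt i l - σ ^ 2 * J k l) * θ l 0
        = ∑ i, ((Wt i k * Wt i l) * (θ k 0 * θ l 0)
            - (σ ^ 2 * J k l) * (θ k 0 * θ l 0)) := by
          refine Finset.sum_congr rfl fun i _ => by ring
      _ = (∑ i, Wt i k * Wt i l) * (θ k 0 * θ l 0)
            - (n : ℝ) * ((σ ^ 2 * J k l) * (θ k 0 * θ l 0)) := by
          rw [Finset.sum_sub_distrib, ← Finset.sum_mul, Finset.sum_const]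
          simp
      _ = θ k 0 * A k l * θ l 0 := by rw [hAkl]; ring
  have hY : (yᵀ * y) 0 0 = ∑ i, (y i 0) ^ 2 := by
    simp [Matrix.mul_apply, Matrix.transpose_apply, sq]
  have heq2' : (n : ℝ) * (1 / (2 * φ)) - (1 / 2) * ((∑ i, (y i 0) ^ 2) - (n : ℝ) * σ ^ 2)
      + (1 / (2 * φ ^ 2)) * (φ ^ 2 * S) = 0 := by
    have h := heq2
    simp only [Finset.sum_add_distrib, Finset.sum_sub_distrib, ← Finset.mul_sum,
      Finset.sum_const, Finset.card_univ, Fintype.card_fin, nsmul_eq_mul] at h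
    rw [hsum2] at h
    convert h using 2
  rw [hD, hY] at hDne ⊢
  field_simp at heq2'
  rw [eq_div_iff hDne]
  have h4 : (4 * φ ^ 2) * (φ * ((∑ i, (y i 0) ^ 2) - (n : ℝ) * σ ^ 2 - S))
      = (4 * φ ^ 2) * (n : ℝ) := by linear_combination (-4 * φ ^ 2) * heq2'
  exact mul_left_cancel₀ (by positivity) h4
end
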